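/- arXiv:1503.02932 — 2 statements merged into one kernel-verified Lean document; each statement's English description precedes it below -/
import Mathlib

section
/- For a prime p and positive integers r, m, with q = p^r, any two quotient rings Z_{p^m}[X]/(f) and Z_{p^m}[X]/(g), where f and g are monic polynomials of degree r over Z_{p^m} that are irreducible modulo p, are isomorphic as rings. -/
/-!
Both residue rings `𝔽_p[X]/(f̄)` and `𝔽_p[X]/(ḡ)` are fields with `p ^ r` elements, hence
isomorphic. Since `f̄` is separable, the image of its root in `𝔽_p[X]/(ḡ)` is a simple root,
and as `p` is nilpotent in `Z_{p^m}[X]/(g)`, Newton's iteration lifts it to a root of `f`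
there. The induced map `Z_{p^m}[X]/(f) → Z_{p^m}[X]/(g)` is surjective modulo `p`, hence
surjective, and therefore bijective because both rings have `p ^ (m * r)` elements.
-/

open Polynomial

theorem RingHom.surjective_of_forall_exists_sub_mem_span {A B : Type*} [CommRing A]
    [CommRing B] (φ : A →+* B) {t : A} (ht : IsNilpotent (φ t))
    (h : ∀ x, ∃ u, x - φ u ∈ Ideal.span {φ t}) : Function.Surjective φ := by
  have approx : ∀ n x, ∃ u, x - φ u ∈ Ideal.span {φ t ^ n} := by
    intro n
    induction n with
    | zero => simp
    | succ n ih =>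
      intro x
      obtain ⟨u, hu⟩ := ih x
      obtain ⟨y, hy⟩ := Ideal.mem_span_singleton.mp hu
      obtain ⟨w, hw⟩ := h y
      obtain ⟨z, hz⟩ := Ideal.mem_span_singleton.mp hw
      refine ⟨u + t ^ n * w, Ideal.mem_span_singleton.mpr ⟨z, ?_⟩⟩
      calc x - φ (u + t ^ n * w) = φ t ^ n * (y - φ w) := by
            rw [map_add, map_mul, map_pow]
            linear_combination hy
        _ = φ t ^ (n + 1) * z := by rw [hz]; ring
  intro x
  obtain ⟨n, hn⟩ := ht
  obtain ⟨u, hu⟩ := approx n x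
  rw [hn, Ideal.span_singleton_eq_bot.mpr rfl, Ideal.mem_bot, sub_eq_zero] at hu
  exact ⟨u, hu.symm⟩

theorem RingHom.isUnit_of_isUnit_apply {B K : Type*} [CommRing B] [CommRing K] {π : B →+* K}
    (hπ : Function.Surjective π) (hker : RingHom.ker π ≤ nilradical B) {y : B}
    (hy : IsUnit (π y)) : IsUnit y := by
  obtain ⟨z, hz⟩ := hπ ↑hy.unit⁻¹
  have hyz : y * z - 1 ∈ RingHom.ker π := by simp [hz]
  have hunit := (mem_nilradical.mp (hker hyz)).isUnit_add_one
  rw [sub_add_cancel] at hunit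
  exact isUnit_of_mul_isUnit_left hunit

theorem Polynomial.exists_isRoot_of_isRoot_map {B K : Type*} [CommRing B] [CommRing K]
    [IsReduced K] {π : B →+* K} (hπ : Function.Surjective π)
    (hker : RingHom.ker π ≤ nilradical B) {P : B[X]} {b : K} (hb : (P.map π).IsRoot b)
    (hb' : IsUnit ((P.map π).derivative.eval b)) : ∃ a, P.IsRoot a ∧ π a = b := by
  obtain ⟨x, rfl⟩ := hπ b
  rw [IsRoot, eval_map, eval₂_at_apply, ← RingHom.mem_ker] at hb
  rw [derivative_map, eval_map, eval₂_at_apply] at hb'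
  obtain ⟨a, ⟨hxa, ha⟩, -⟩ := existsUnique_nilpotent_sub_and_aeval_eq_zero (x := x) (P := P)
    (by simpa using mem_nilradical.mp (hker hb))
    (by simpa using RingHom.isUnit_of_isUnit_apply hπ hker hb')
  refine ⟨a, by simpa using ha, ?_⟩
  rw [eq_comm, ← sub_eq_zero, ← map_sub]
  exact (hxa.map π).eq_zero

theorem Polynomial.Separable.isUnit_aeval_derivative {R S : Type*} [CommRing R] [CommRing S]
    [Algebra R S] {f : R[X]} (hf : f.Separable) {x : S} (hx : aeval x f = 0) :
    IsUnit (aeval x (derivative f)) := by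
  obtain ⟨u, v, huv⟩ := hf
  refine IsUnit.of_mul_eq_one_right (aeval x v) ?_
  have := congrArg (aeval x) huv
  rwa [map_add, map_mul, map_mul, hx, mul_zero, zero_add, map_one] at this

theorem ZMod.ker_castHom {m n : ℕ} (h : m ∣ n) :
    RingHom.ker (ZMod.castHom h (ZMod m)) = Ideal.span {(m : ZMod n)} := by
  have hcomp : (ZMod.castHom h (ZMod m)).comp (Int.castRingHom (ZMod n)) = Int.castRingHom _ :=
    RingHom.ext_int _ _
  rw [← Ideal.map_comap_of_surjective (Int.castRingHom (ZMod n)) ZMod.intCast_surjective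
    (RingHom.ker _), RingHom.comap_ker, hcomp, ZMod.ker_intCastRingHom, Ideal.map_span,
    Set.image_singleton, eq_intCast, Int.cast_natCast]

namespace AdjoinRoot

variable {R k : Type*} [CommRing R] [CommRing k] {c : R →+* k}

theorem natCard_eq_pow_natDegree {f : R[X]} (hf : f.Monic) :
    Nat.card (AdjoinRoot f) = Nat.card R ^ f.natDegree := by
  rw [Nat.card_congr (powerBasis' hf).basis.equivFun.toEquiv, Nat.card_fun,
    Nat.card_eq_fintype_card (α := Fin _), Fintype.card_fin, powerBasis'_dim]

theorem finite_of_monic [Finite R] {f : R[X]} (hf : f.Monic) : Finite (AdjoinRoot f) :=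
  have := hf.finite_adjoinRoot
  Module.finite_of_finite R

theorem map_mk (c : R →+* k) (g q : R[X]) :
    map c g (g.map c) dvd_rfl (mk g q) = mk (g.map c) (q.map c) := by
  rw [map, lift_mk, ← aeval_eq, aeval_def, eval₂_map, algebraMap_eq]

theorem map_surjective (hc : Function.Surjective c) (g : R[X]) :
    Function.Surjective (map c g (g.map c) dvd_rfl) := by
  intro y
  obtain ⟨q, rfl⟩ := mk_surjective y
  obtain ⟨q, rfl⟩ := Polynomial.map_surjective c hc q
  exact ⟨mk g q, map_mk c g q⟩

theorem ker_map (hc : Function.Surjective c) (g : R[X]) :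
    RingHom.ker (map c g (g.map c) dvd_rfl) = (RingHom.ker c).map (of g) := by
  refine le_antisymm (fun x hx => ?_) (Ideal.map_le_iff_le_comap.mpr fun r hr => ?_)
  · obtain ⟨q, rfl⟩ := mk_surjective x
    rw [RingHom.mem_ker, map_mk, mk_eq_zero] at hx
    obtain ⟨s, hs⟩ := hx
    obtain ⟨s, rfl⟩ := Polynomial.map_surjective c hc s
    have hq : q - g * s ∈ (RingHom.ker c).map C := by
      rw [← Polynomial.ker_mapRingHom, RingHom.mem_ker, coe_mapRingHom, Polynomial.map_sub,
        Polynomial.map_mul, hs, sub_self]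
    rw [show mk g q = mk g (q - g * s) by simp, of, ← Ideal.map_map]
    exact Ideal.mem_map_of_mem _ hq
  · rw [Ideal.mem_comap, RingHom.mem_ker, map_of, RingHom.mem_ker.mp hr, map_zero]

variable {f g : R[X]}

theorem exists_lift_of_algEquiv [IsReduced (AdjoinRoot (g.map c))]
    (e : AdjoinRoot (f.map c) ≃ₐ[k] AdjoinRoot (g.map c)) (hc : Function.Surjective c)
    (hnil : RingHom.ker c ≤ nilradical R) (hsep : (f.map c).Separable) :
    ∃ φ : AdjoinRoot f →+* AdjoinRoot g, φ.comp (of f) = of g ∧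
      (map c g (g.map c) dvd_rfl).comp φ = (e : _ →+* _).comp (map c f (f.map c) dvd_rfl) := by
  set πg := map c g (g.map c) dvd_rfl
  have hkernil : RingHom.ker πg ≤ nilradical _ := by
    rw [ker_map hc, Ideal.map_le_iff_le_comap]
    exact fun r hr => (mem_nilradical.mp (hnil hr)).map (of g)
  have hred : (f.map (of g)).map πg = (f.map c).map (algebraMap k _) := by
    rw [Polynomial.map_map, Polynomial.map_map]
    congr 1
    ext r
    simp [πg]
  have hroot : aeval (e (root (f.map c))) (f.map c) = 0 := by
    rw [aeval_algHom_apply, aeval_eq, mk_self, map_zero]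
  obtain ⟨a, ha, hπa⟩ := exists_isRoot_of_isRoot_map (map_surjective hc g) hkernil
    (P := f.map (of g)) (b := e (root (f.map c)))
    (by rwa [hred, IsRoot, eval_map_algebraMap])
    (by rw [hred, derivative_map, eval_map_algebraMap]; exact hsep.isUnit_aeval_derivative hroot)
  refine ⟨lift (of g) a (by rwa [IsRoot, eval_map] at ha), ?_, ?_⟩
  · ext r
    simp
  · refine ringHom_ext ?_ (by simpa using hπa)
    ext r
    simp only [RingHom.coe_comp, Function.comp_apply, lift_of, map_of, RingHom.coe_coe, πg]
    rw [← algebraMap_eq, ← algebraMap_eq, AlgEquiv.commutes]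

theorem nonempty_ringEquiv_of_algEquiv [Finite R] [IsReduced (AdjoinRoot (g.map c))]
    (hc : Function.Surjective c) {t : R} (hker : RingHom.ker c = Ideal.span {t})
    (ht : IsNilpotent t) (hf : f.Monic) (hg : g.Monic) (hdeg : f.natDegree = g.natDegree)
    (hsep : (f.map c).Separable) (e : AdjoinRoot (f.map c) ≃ₐ[k] AdjoinRoot (g.map c)) :
    Nonempty (AdjoinRoot f ≃+* AdjoinRoot g) := by
  have hnil : RingHom.ker c ≤ nilradical R := by
    rwa [hker, Ideal.span_singleton_le_iff_mem, mem_nilradical]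
  obtain ⟨φ, hφR, hφres⟩ := exists_lift_of_algEquiv e hc hnil hsep
  have hφt : φ (of f t) = of g t := congrArg (· t) hφR
  have hkerg : RingHom.ker (map c g (g.map c) dvd_rfl) = Ideal.span {φ (of f t)} := by
    rw [ker_map hc, hker, Ideal.map_span, Set.image_singleton, hφt]
  have hsurj : Function.Surjective φ := by
    refine RingHom.surjective_of_forall_exists_sub_mem_span φ (hφt ▸ ht.map (of g)) fun x => ?_
    obtain ⟨u, hu⟩ := (e.surjective.comp (map_surjective hc f)) (map c g (g.map c) dvd_rfl x)
    refine ⟨u, ?_⟩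
    rw [← hkerg, RingHom.mem_ker, map_sub, ← RingHom.comp_apply _ φ, hφres]
    simpa [sub_eq_zero] using hu.symm
  have := finite_of_monic hf
  refine ⟨RingEquiv.ofBijective φ (hsurj.bijective_of_nat_card_le ?_)⟩
  rw [natCard_eq_pow_natDegree hf, natCard_eq_pow_natDegree hg, hdeg]

end AdjoinRoot

theorem galois_ring_well_defined_general (p r m : ℕ) (hp : p.Prime) (hm : 0 < m)
    (f g : (ZMod (p ^ m))[X]) (hf : f.Monic) (hg : g.Monic)
    (hfd : f.natDegree = r) (hgd : g.natDegree = r)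
    (hfi : Irreducible (f.map (ZMod.castHom (dvd_pow_self p hm.ne') (ZMod p))))
    (hgi : Irreducible (g.map (ZMod.castHom (dvd_pow_self p hm.ne') (ZMod p)))) :
    Nonempty (((ZMod (p ^ m))[X] ⧸ Ideal.span {f}) ≃+* ((ZMod (p ^ m))[X] ⧸ Ideal.span {g})) := by
  set c := ZMod.castHom (dvd_pow_self p hm.ne') (ZMod p)
  have : Fact p.Prime := ⟨hp⟩
  have : Fact (Irreducible (f.map c)) := ⟨hfi⟩
  have : Fact (Irreducible (g.map c)) := ⟨hgi⟩
  have := AdjoinRoot.finite_of_monic (hf.map c)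
  have := AdjoinRoot.finite_of_monic (hg.map c)
  let _ := Fintype.ofFinite (AdjoinRoot (f.map c))
  let _ := Fintype.ofFinite (AdjoinRoot (g.map c))
  have hcard : Fintype.card (AdjoinRoot (f.map c)) = Fintype.card (AdjoinRoot (g.map c)) := by
    simp only [← Nat.card_eq_fintype_card, AdjoinRoot.natCard_eq_pow_natDegree (hf.map c),
      AdjoinRoot.natCard_eq_pow_natDegree (hg.map c), hf.natDegree_map, hg.natDegree_map,
      hfd, hgd]
  have hp_nil : IsNilpotent (p : ZMod (p ^ m)) := ⟨m, by rw [← Nat.cast_pow, ZMod.natCast_self]⟩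
  exact AdjoinRoot.nonempty_ringEquiv_of_algEquiv (ZMod.ringHom_surjective c)
    (ZMod.ker_castHom _) hp_nil hf hg (hfd.trans hgd.symm)
    (PerfectField.separable_of_irreducible hfi) (FiniteField.algEquivOfCardEq p hcard)

/-- Well-definedness of the Galois ring GR(q^m, p^m): any two quotients
`Z_{p^m}[X]/(f)` and `Z_{p^m}[X]/(g)` with `f, g` monic of degree `r` and
irreducible modulo `p` are isomorphic as rings. -/
theorem galois_ring_well_defined (p r m : ℕ) (hp : p.Prime) (hr : 0 < r) (hm : 0 < m)
    (f g : (ZMod (p ^ m))[X]) (hf : f.Monic) (hg : g.Monic)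
    (hfd : f.natDegree = r) (hgd : g.natDegree = r)
    (hfi : Irreducible (f.map (ZMod.castHom (dvd_pow_self p hm.ne') (ZMod p))))
    (hgi : Irreducible (g.map (ZMod.castHom (dvd_pow_self p hm.ne') (ZMod p)))) :
    Nonempty (((ZMod (p ^ m))[X] ⧸ Ideal.span {f}) ≃+* ((ZMod (p ^ m))[X] ⧸ Ideal.span {g})) :=
  galois_ring_well_defined_general p r m hp hm f g hf hg hfd hgd hfi hgi
end

section
/- Let R be a Galois ring GR(q^m, p^m) with m ≥ 2. Then there exist two distinct lines of PHG(2, R) (free rank-2 submodules of R^3) whose intersection contains at least two distinct points (free rank-1 submodules of R^3), i.e., PHG(2,R) is not a linear space for m ≥ 2. -/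
/-!
A nonzero zero divisor `π` with `ε * π = 0`, `ε ≠ 0` already breaks the incidence axiom: the
lines `⟨e₀, e₁⟩` and `⟨e₀, e₁ + π e₂⟩` are distinct, yet both contain the point `⟨e₀ + ε e₁⟩`
besides `⟨e₀⟩`, since `e₀ + ε e₁ = e₀ + ε (e₁ + π e₂)`. In `GR(p^m, r)` with `m ≥ 2` one takes
`π = p` and `ε = p^(m-1)`, which are nonzero because `ZMod (p^m)` embeds in `GR(p^m, r)`.
-/

open Polynomial

section FreeSpans

variable {R ι : Type*} [CommRing R]

lemma nonempty_span_singleton_linearEquiv_of_apply_eq_one {v : ι → R} {i : ι} (hv : v i = 1) :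
    Nonempty (Submodule.span R {v} ≃ₗ[R] R) := by
  have hinj : Function.Injective (LinearMap.toSpanSingleton R (ι → R) v) := fun a b hab => by
    simpa [hv] using congrFun hab i
  exact ⟨(LinearEquiv.ofEq _ _ (LinearMap.span_singleton_eq_range R _ v)).trans
    (LinearEquiv.ofInjective _ hinj).symm⟩

lemma nonempty_span_pair_linearEquiv_of_apply_eq {a b : ι → R} {i j : ι}
    (hai : a i = 1) (hbi : b i = 0) (hbj : b j = 1) :
    Nonempty (Submodule.span R {a, b} ≃ₗ[R] (Fin 2 → R)) := by
  have hli : LinearIndependent R ![a, b] := LinearIndependent.pair_iff.mpr fun s t hst => by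
    have hs : s = 0 := by simpa [hai, hbi] using congrFun hst i
    exact ⟨hs, by simpa [hs, hbj] using congrFun hst j⟩
  rw [← Matrix.range_cons_cons_empty a b ![]]
  exact ⟨(Module.Basis.span hli).equivFun⟩

end FreeSpans

theorem exists_two_lines_through_two_points_of_mul_eq_zero {R : Type*} [CommRing R] {π ε : R}
    (hπ : π ≠ 0) (hε : ε ≠ 0) (hεπ : ε * π = 0) :
    ∃ L₁ L₂ P₁ P₂ : Submodule R (Fin 3 → R),
      Nonempty (L₁ ≃ₗ[R] (Fin 2 → R)) ∧ Nonempty (L₂ ≃ₗ[R] (Fin 2 → R)) ∧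
      Nonempty (P₁ ≃ₗ[R] R) ∧ Nonempty (P₂ ≃ₗ[R] R) ∧
      L₁ ≠ L₂ ∧ P₁ ≠ P₂ ∧ P₁ ≤ L₁ ∧ P₁ ≤ L₂ ∧ P₂ ≤ L₁ ∧ P₂ ≤ L₂ := by
  refine ⟨Submodule.span R {![1, 0, 0], ![0, 1, 0]}, Submodule.span R {![1, 0, 0], ![0, 1, π]},
    Submodule.span R {![1, 0, 0]}, Submodule.span R {![1, ε, 0]},
    nonempty_span_pair_linearEquiv_of_apply_eq (i := 0) (j := 1) rfl rfl rfl,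
    nonempty_span_pair_linearEquiv_of_apply_eq (i := 0) (j := 1) rfl rfl rfl,
    nonempty_span_singleton_linearEquiv_of_apply_eq_one (i := 0) rfl,
    nonempty_span_singleton_linearEquiv_of_apply_eq_one (i := 0) rfl, ?_, ?_,
    Submodule.span_mono (by simp), Submodule.span_mono (by simp), ?_, ?_⟩
  · intro h
    have hw : ![0, 1, π] ∈ Submodule.span R {![1, 0, 0], ![0, 1, 0]} :=
      h ▸ Submodule.subset_span (by simp)
    obtain ⟨s, t, hst⟩ := Submodule.mem_span_pair.mp hw
    exact hπ (by simpa using (congrFun hst 2).symm)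
  · intro h
    have hu : ![1, ε, 0] ∈ Submodule.span R {![1, 0, 0]} := h ▸ Submodule.mem_span_singleton_self _
    obtain ⟨s, hs⟩ := Submodule.mem_span_singleton.mp hu
    exact hε (by simpa using (congrFun hs 1).symm)
  · refine (Submodule.span_singleton_le_iff_mem _ _).mpr (Submodule.mem_span_pair.mpr ⟨1, ε, ?_⟩)
    ext k; fin_cases k <;> simp
  · refine (Submodule.span_singleton_le_iff_mem _ _).mpr (Submodule.mem_span_pair.mpr ⟨1, ε, ?_⟩)
    ext k; fin_cases k <;> simp [hεπ]

lemma AdjoinRoot.of_injective_of_monic {S : Type*} [CommRing S] {f : S[X]} (hf : f.Monic)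
    (hdeg : 0 < f.natDegree) : Function.Injective (AdjoinRoot.of f) :=
  (injective_iff_map_eq_zero _).mpr fun c hc => by
    by_contra hc0
    exact mk_ne_zero_of_natDegree_lt hf (C_ne_zero.mpr hc0) (by simpa using hdeg) hc

lemma ZMod.natCast_pow_ne_zero_of_lt {p k m : ℕ} (hp : 1 < p) (hk : k < m) :
    (p : ZMod (p ^ m)) ^ k ≠ 0 := by
  rw [← Nat.cast_pow, Ne, ZMod.natCast_eq_zero_iff, Nat.pow_dvd_pow_iff_le_right hp]
  omega

/-- For a Galois ring `R = GR(q^m, p^m)` with `m ≥ 2`, the projective Hjelmslev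
plane `PHG(2, R)` is not a linear space: there are two distinct lines (free
rank-2 submodules of `R^3`) containing two distinct common points (free rank-1
submodules). -/
theorem PHG_not_linear_space (p r m : ℕ) (hp : p.Prime) (hr : 0 < r) (hm : 2 ≤ m)
    (f : (ZMod (p ^ m))[X]) (hf : f.Monic) (hfd : f.natDegree = r) :
    ∃ L₁ L₂ P₁ P₂ : Submodule ((ZMod (p ^ m))[X] ⧸ Ideal.span {f})
        (Fin 3 → ((ZMod (p ^ m))[X] ⧸ Ideal.span {f})),
      Nonempty (L₁ ≃ₗ[(ZMod (p ^ m))[X] ⧸ Ideal.span {f}]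
        (Fin 2 → ((ZMod (p ^ m))[X] ⧸ Ideal.span {f}))) ∧
      Nonempty (L₂ ≃ₗ[(ZMod (p ^ m))[X] ⧸ Ideal.span {f}]
        (Fin 2 → ((ZMod (p ^ m))[X] ⧸ Ideal.span {f}))) ∧
      Nonempty (P₁ ≃ₗ[(ZMod (p ^ m))[X] ⧸ Ideal.span {f}]
        ((ZMod (p ^ m))[X] ⧸ Ideal.span {f})) ∧
      Nonempty (P₂ ≃ₗ[(ZMod (p ^ m))[X] ⧸ Ideal.span {f}]
        ((ZMod (p ^ m))[X] ⧸ Ideal.span {f})) ∧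
      L₁ ≠ L₂ ∧ P₁ ≠ P₂ ∧ P₁ ≤ L₁ ∧ P₁ ≤ L₂ ∧ P₂ ≤ L₁ ∧ P₂ ≤ L₂ := by
  have hinj := AdjoinRoot.of_injective_of_monic hf (hfd ▸ hr)
  have hε : (p : ZMod (p ^ m)) ^ (m - 1) ≠ 0 := ZMod.natCast_pow_ne_zero_of_lt hp.one_lt (by omega)
  have hπ : (p : ZMod (p ^ m)) ≠ 0 := by
    simpa using ZMod.natCast_pow_ne_zero_of_lt (k := 1) hp.one_lt (by omega)
  have hεπ : (p : ZMod (p ^ m)) ^ (m - 1) * p = 0 := by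
    rw [← pow_succ, Nat.sub_add_cancel (by omega), ← Nat.cast_pow, ZMod.natCast_self]
  exact exists_two_lines_through_two_points_of_mul_eq_zero (R := AdjoinRoot f)
    ((map_ne_zero_iff _ hinj).mpr hπ) ((map_ne_zero_iff _ hinj).mpr hε) (by rw [← map_mul, hεπ, map_zero])
end
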